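/- If $n = 3k + 2$, then $\rho(K_{2k+1} \vee N_{k+1}) + \rho(N_{2k+1} + K_{k+1}) = \rho(K_{2k+2} \vee N_k) + \rho(N_{2k+2} + K_k) = 4k+1$, i.e., both $q = \lfloor n/3 \rfloor$ and $q = \lceil n/3 \rceil$ give the same value of $\rho(K_q\vee N_{n-q}) + \rho(\overline{K_q\vee N_{n-q}})$ when $n \equiv 2 \pmod 3$. -/

import Mathlib

/-- The spectral radius of a real square matrix: the maximum modulus of its
complex eigenvalues (roots of the characteristic polynomial over `ℂ`). -/
noncomputable def specRad {n : ℕ} (A : Matrix (Fin n) (Fin n) ℝ) : ℝ :=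
  sSup {x : ℝ | ∃ μ : ℂ, (A.map Complex.ofReal).charpoly.IsRoot μ ∧ x = ‖μ‖}

/-- The complete split graph `K_q ∨ N_{n-q}` on vertex set `Fin n`:
the first `q` vertices form a clique, joined to `n - q` independent vertices. -/
def completeSplitGraph (n q : ℕ) : SimpleGraph (Fin n) where
  Adj i j := i ≠ j ∧ ((i : ℕ) < q ∨ (j : ℕ) < q)
  symm := by
    constructor
    intro i j h
    exact ⟨h.1.symm, h.2.symm⟩
  loopless := by
    constructor
    intro i h
    exact h.1 rfl

instance (n q : ℕ) : DecidableRel (completeSplitGraph n q).Adj :=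
  fun i j => inferInstanceAs (Decidable (i ≠ j ∧ ((i : ℕ) < q ∨ (j : ℕ) < q)))

/-!
For a nonnegative matrix `A`, a positive vector `x` with `A x ≤ r x` bounds the modulus of every
complex eigenvalue by `r`, so such an `x` together with a real eigenvector for `r` pins the
spectral radius down to `r`. For `K_q ∨ N_{n-q}` the vector equal to `r` on the clique and to `q`
on the independent set is a positive eigenvector as soon as `r² = (q - 1) r + q (n - q)`; its
complement `N_q + K_{n-q}` has maximum degree `n - q - 1`, attained as an eigenvalue by the
indicator of the clique. For `n = 3k + 2` the two choices `q = k + 1` and `q = k` give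
`r = 2k + 1` and `r = 2k`, against complement radii `2k` and `2k + 1`.
-/

open Matrix Polynomial Finset SimpleGraph

theorem Matrix.isRoot_charpoly_iff_exists_mulVec_eq_smul {ι K : Type*} [Fintype ι]
    [DecidableEq ι] [Field K] (A : Matrix ι ι K) (μ : K) :
    A.charpoly.IsRoot μ ↔ ∃ v ≠ 0, A *ᵥ v = μ • v := by
  rw [← charpoly_toLin', ← Module.End.hasEigenvalue_iff_isRoot_charpoly,
    Module.End.hasEigenvalue_iff, Submodule.ne_bot_iff]
  simp [and_comm]

/-- Evaluate `A v = μ v` at a coordinate maximizing `‖v i‖ / x i`. -/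
theorem Matrix.norm_le_of_mulVec_eq_smul_of_mulVec_le {ι : Type*} [Fintype ι]
    {A : Matrix ι ι ℝ} (hA : ∀ i j, 0 ≤ A i j) {x : ι → ℝ} (hx : ∀ i, 0 < x i) {r : ℝ}
    (hAx : ∀ i, (A *ᵥ x) i ≤ r * x i) {μ : ℂ} {v : ι → ℂ} (hv : v ≠ 0)
    (hAv : A.map (↑) *ᵥ v = μ • v) : ‖μ‖ ≤ r := by
  obtain ⟨j, hj⟩ := Function.ne_iff.mp hv
  have : Nonempty ι := ⟨j⟩
  obtain ⟨i, hi⟩ := Finite.exists_max fun j => ‖v j‖ / x j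
  set t := ‖v i‖ / x i
  have hvt : ∀ j, ‖v j‖ ≤ t * x j := fun j => (div_le_iff₀ (hx j)).1 (hi j)
  have ht : 0 < t := pos_of_mul_pos_left ((norm_pos_iff.2 hj).trans_le (hvt j)) (hx j).le
  have hvi : 0 < ‖v i‖ := div_pos_iff_of_pos_right (hx i) |>.1 ht
  refine le_of_mul_le_mul_right ?_ hvi
  calc ‖μ‖ * ‖v i‖ = ‖∑ j, (A i j : ℂ) * v j‖ := by
        rw [← norm_mul, ← smul_eq_mul, ← Pi.smul_apply, ← hAv]; rfl
    _ ≤ ∑ j, A i j * ‖v j‖ := by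
        refine (norm_sum_le _ _).trans_eq (sum_congr rfl fun j _ => ?_)
        rw [norm_mul, Complex.norm_real, Real.norm_of_nonneg (hA i j)]
    _ ≤ ∑ j, A i j * (t * x j) := by gcongr with j; exact hA i j; exact hvt j
    _ = t * (A *ᵥ x) i := by
        simp only [mulVec, dotProduct, mul_sum]
        exact sum_congr rfl fun j _ => by ring
    _ ≤ t * (r * x i) := mul_le_mul_of_nonneg_left (hAx i) ht.le
    _ = r * ‖v i‖ := by rw [mul_left_comm, div_mul_cancel₀ _ (hx i).ne']

theorem specRad_eq_of_mulVec_le_of_mulVec_eq_smul {n : ℕ} {A : Matrix (Fin n) (Fin n) ℝ}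
    (hA : ∀ i j, 0 ≤ A i j) {x : Fin n → ℝ} (hx : ∀ i, 0 < x i) {r : ℝ}
    (hAx : ∀ i, (A *ᵥ x) i ≤ r * x i) {y : Fin n → ℝ} (hy : y ≠ 0) (hAy : A *ᵥ y = r • y) :
    specRad A = r := by
  have hbound : ∀ μ : ℂ, (A.map (↑)).charpoly.IsRoot μ → ‖μ‖ ≤ r := fun μ hμ => by
    obtain ⟨v, hv, hAv⟩ := (isRoot_charpoly_iff_exists_mulVec_eq_smul _ μ).1 hμ
    exact norm_le_of_mulVec_eq_smul_of_mulVec_le hA hx hAx hv hAv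
  have hr : (A.map (↑)).charpoly.IsRoot (r : ℂ) := by
    refine (isRoot_charpoly_iff_exists_mulVec_eq_smul _ _).2 ⟨(↑) ∘ y, ?_, ?_⟩
    · exact fun h => hy (funext fun i => Complex.ofReal_injective (congrFun h i))
    · ext i
      exact (RingHom.map_mulVec Complex.ofRealHom A y i).symm.trans (by simp [hAy])
  have hr_norm : ‖(r : ℂ)‖ = r := by
    rw [Complex.norm_real, Real.norm_eq_abs, abs_eq_self]
    exact (norm_nonneg _).trans (hbound _ hr)
  exact IsGreatest.csSup_eq ⟨⟨r, hr, hr_norm.symm⟩, by rintro _ ⟨μ, hμ, rfl⟩; exact hbound μ hμ⟩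

theorem SimpleGraph.adjMatrix_apply_nonneg {V α : Type*} [DecidableEq V] (G : SimpleGraph V)
    [DecidableRel G.Adj] [Zero α] [One α] [Preorder α] [ZeroLEOneClass α] (i j : V) :
    0 ≤ G.adjMatrix α i j := by
  rw [adjMatrix_apply]
  split_ifs
  exacts [zero_le_one, le_rfl]

theorem Fin.card_filter_not_val_lt {n q : ℕ} : #{j : Fin n | ¬ (j : ℕ) < q} = n - q := by
  rw [filter_not, card_sdiff_of_subset (filter_subset _ _), card_univ, Fintype.card_fin,
    Fin.card_filter_val_lt]
  omega

theorem Fin.sum_ite_val_lt {M : Type*} [AddCommMonoid M] {n q : ℕ} (h : q ≤ n) (a b : M) :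
    ∑ j : Fin n, (if (j : ℕ) < q then a else b) = q • a + (n - q) • b := by
  rw [Finset.sum_ite, Finset.sum_const, Finset.sum_const, Fin.card_filter_val_lt, min_eq_right h,
    Fin.card_filter_not_val_lt]

namespace completeSplitGraph

variable {n q : ℕ}

theorem adj_iff {i j : Fin n} :
    (completeSplitGraph n q).Adj i j ↔ i ≠ j ∧ ((i : ℕ) < q ∨ (j : ℕ) < q) := Iff.rfl

theorem neighborFinset_of_lt {i : Fin n} (hi : (i : ℕ) < q) :
    (completeSplitGraph n q).neighborFinset i = univ.erase i := by
  ext j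
  simp [adj_iff, hi, ne_comm]

theorem neighborFinset_of_le {i : Fin n} (hi : q ≤ i) :
    (completeSplitGraph n q).neighborFinset i = ({j | (j : ℕ) < q} : Finset (Fin n)) := by
  ext j
  simp only [mem_neighborFinset, adj_iff, mem_filter, mem_univ, true_and, ne_eq, Fin.ext_iff]
  omega

theorem compl_neighborFinset_of_lt {i : Fin n} (hi : (i : ℕ) < q) :
    (completeSplitGraph n q)ᶜ.neighborFinset i = ∅ := by
  ext j
  simp [adj_iff, hi]

theorem compl_neighborFinset_of_le {i : Fin n} (hi : q ≤ i) :
    (completeSplitGraph n q)ᶜ.neighborFinset i =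
      ({j | ¬ (j : ℕ) < q} : Finset (Fin n)).erase i := by
  ext j
  simp only [mem_neighborFinset, compl_adj, adj_iff, mem_erase, mem_filter, mem_univ, true_and,
    ne_eq, Fin.ext_iff]
  omega

variable {α : Type*} [CommRing α]

theorem adjMatrix_mulVec_ite_apply (h : q ≤ n) (a b : α) (i : Fin n) :
    ((completeSplitGraph n q).adjMatrix α *ᵥ fun j => if (j : ℕ) < q then a else b) i =
      if (i : ℕ) < q then ((q : α) - 1) * a + ((n : α) - q) * b else q * a := by
  rw [adjMatrix_mulVec_apply]
  split_ifs with hi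
  · rw [neighborFinset_of_lt hi, sum_erase_eq_sub (mem_univ i), Fin.sum_ite_val_lt h, if_pos hi,
      nsmul_eq_mul, nsmul_eq_mul, Nat.cast_sub h]
    ring
  · rw [neighborFinset_of_le (not_lt.1 hi), sum_ite_of_true fun j hj => (mem_filter.1 hj).2,
      sum_const, Fin.card_filter_val_lt, min_eq_right h, nsmul_eq_mul]

theorem compl_adjMatrix_mulVec_ite_apply (h : q ≤ n) (a b : α) (i : Fin n) :
    ((completeSplitGraph n q)ᶜ.adjMatrix α *ᵥ fun j => if (j : ℕ) < q then a else b) i =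
      if (i : ℕ) < q then 0 else ((n : α) - q - 1) * b := by
  rw [adjMatrix_mulVec_apply]
  split_ifs with hi
  · rw [compl_neighborFinset_of_lt hi, sum_empty]
  · rw [compl_neighborFinset_of_le (not_lt.1 hi), sum_erase_eq_sub (mem_filter.2 ⟨mem_univ i, hi⟩),
      sum_ite_of_false fun j hj => (mem_filter.1 hj).2, sum_const, Fin.card_filter_not_val_lt,
      if_neg hi, nsmul_eq_mul, Nat.cast_sub h]
    ring

theorem specRad_adjMatrix (hq : 0 < q) (h : q ≤ n) {r : ℝ} (hr : 0 < r)
    (hr_sq : r ^ 2 = (q - 1) * r + q * (n - q)) :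
    specRad ((completeSplitGraph n q).adjMatrix ℝ) = r := by
  set x : Fin n → ℝ := fun j => if (j : ℕ) < q then r else q
  have hx : ∀ i, 0 < x i := fun i => by
    simp only [x]
    split_ifs
    exacts [hr, Nat.cast_pos.2 hq]
  have hAx : (completeSplitGraph n q).adjMatrix ℝ *ᵥ x = r • x := funext fun i => by
    rw [adjMatrix_mulVec_ite_apply h, Pi.smul_apply, smul_eq_mul]
    simp only [x]
    split_ifs
    · linear_combination -hr_sq
    · ring
  refine specRad_eq_of_mulVec_le_of_mulVec_eq_smul (adjMatrix_apply_nonneg _) hx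
    (fun i => (congrFun hAx i).le) ?_ hAx
  exact fun h0 => (hx ⟨0, hq.trans_le h⟩).ne' (congrFun h0 _)

theorem specRad_compl_adjMatrix (h : q < n) :
    specRad ((completeSplitGraph n q)ᶜ.adjMatrix ℝ) = n - q - 1 := by
  have hr : (0 : ℝ) ≤ n - q - 1 := by
    rw [sub_sub, sub_nonneg]
    exact_mod_cast h
  set y : Fin n → ℝ := fun j => if (j : ℕ) < q then 0 else 1
  have hAy : (completeSplitGraph n q)ᶜ.adjMatrix ℝ *ᵥ y = ((n : ℝ) - q - 1) • y :=
    funext fun i => by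
      rw [compl_adjMatrix_mulVec_ite_apply h.le, Pi.smul_apply, smul_eq_mul]
      simp only [y]
      split_ifs <;> ring
  have hAx : ∀ i, ((completeSplitGraph n q)ᶜ.adjMatrix ℝ *ᵥ fun _ => 1) i ≤ (n - q - 1) * 1 :=
    fun i => by
      have := compl_adjMatrix_mulVec_ite_apply h.le (1 : ℝ) 1 i
      simp only [ite_self] at this
      rw [this]
      split_ifs
      exacts [by linarith, le_rfl]
  refine specRad_eq_of_mulVec_le_of_mulVec_eq_smul (adjMatrix_apply_nonneg _) (fun _ => one_pos)
    hAx ?_ hAy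
  exact fun h0 => one_ne_zero ((if_neg (lt_irrefl q)).symm.trans (congrFun h0 ⟨q, h⟩))

end completeSplitGraph

/-- When `n = 3k + 2`, both `q = ⌊n/3⌋ = k` and `q = ⌈n/3⌉ = k + 1` give the same
value `4k + 1` of `ρ(K_q ∨ N_{n-q}) + ρ(complement of K_q ∨ N_{n-q})`
(the complement being `N_q + K_{n-q}`). -/
theorem rho_sum_n_eq_two_mod_three (k : ℕ) (hk : 1 ≤ k) :
    specRad ((completeSplitGraph (3 * k + 2) (k + 1)).adjMatrix ℝ) +
      specRad (((completeSplitGraph (3 * k + 2) (k + 1))ᶜ).adjMatrix ℝ) = 4 * (k : ℝ) + 1 ∧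
    specRad ((completeSplitGraph (3 * k + 2) k).adjMatrix ℝ) +
      specRad (((completeSplitGraph (3 * k + 2) k)ᶜ).adjMatrix ℝ) = 4 * (k : ℝ) + 1 := by
  have hk' : (0 : ℝ) < k := by exact_mod_cast hk
  constructor
  · rw [completeSplitGraph.specRad_adjMatrix (r := 2 * k + 1) k.succ_pos (by omega) (by positivity)
        (by push_cast; ring),
      completeSplitGraph.specRad_compl_adjMatrix (by omega)]
    push_cast
    ring
  · rw [completeSplitGraph.specRad_adjMatrix (r := 2 * k) hk (by omega) (by positivity)
        (by push_cast; ring),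
      completeSplitGraph.specRad_compl_adjMatrix (by omega)]
    push_cast
    ring
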